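/- arXiv:2103.06975 — 2 statements merged into one kernel-verified Lean document; each statement's English description precedes it below -/
import Mathlib

section
/- The polynomial P: C^3 → R, P(z,w_1,w_2) = |z|²·(|w_1|⁴ + |w_1² − w_1 w_2|² + |w_2|⁴), is a non-constant homogeneous plurisubharmonic polynomial without pluriharmonic terms, homogeneous of degree 2 in (z, z̄), and there do NOT exist a homogeneous plurisubharmonic polynomial Q: C² → R and holomorphic polynomials F_1, F_2: C³ → C homogeneous of the same degree with P = Q ∘ (F_1, F_2) on C³. -/
set_option maxHeartbeats 1000000


open Finset
open scoped ComplexConjugate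

/-- Multi-index power `z^α = ∏ i, z i ^ α i`. -/
noncomputable def mpow {n : ℕ} (z : Fin n → ℂ) (α : Fin n →₀ ℕ) : ℂ :=
  ∏ i, z i ^ α i

/-- Value of the polynomial `P(z) = ∑_{(α,β)∈J} a_{α,β} z^α z̄^β`. -/
noncomputable def pval {n : ℕ} (J : Finset ((Fin n →₀ ℕ) × (Fin n →₀ ℕ)))
    (a : (Fin n →₀ ℕ) × (Fin n →₀ ℕ) → ℂ) (z : Fin n → ℂ) : ℂ :=
  ∑ p ∈ J, a p * mpow z p.1 * conj (mpow z p.2)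

/-- Levi form `L(P; z, V) = ∑_{i,j} (∂²P/∂z_i∂z̄_j)(z) V_i conj(V_j)` of
`P(z) = ∑_{(α,β)∈J} a_{α,β} z^α z̄^β`, computed termwise via
`∂²(z^α z̄^β)/∂z_i∂z̄_j = α_i β_j z^{α-e_i} z̄^{β-e_j}`. -/
noncomputable def leviForm {n : ℕ} (J : Finset ((Fin n →₀ ℕ) × (Fin n →₀ ℕ)))
    (a : (Fin n →₀ ℕ) × (Fin n →₀ ℕ) → ℂ) (z V : Fin n → ℂ) : ℂ :=
  ∑ p ∈ J, a p * ∑ i, ∑ j,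
    (p.1 i : ℂ) * (p.2 j : ℂ) * mpow z (p.1 - Finsupp.single i 1) *
      conj (mpow z (p.2 - Finsupp.single j 1)) * V i * conj (V j)


/-- The multi-index of `z·w₁²`. -/
noncomputable def A1 : Fin 3 →₀ ℕ := Finsupp.single 0 1 + Finsupp.single 1 2
/-- The multi-index of `z·w₁·w₂`. -/
noncomputable def A2 : Fin 3 →₀ ℕ :=
  Finsupp.single 0 1 + Finsupp.single 1 1 + Finsupp.single 2 1
/-- The multi-index of `z·w₂²`. -/
noncomputable def A3 : Fin 3 →₀ ℕ := Finsupp.single 0 1 + Finsupp.single 2 2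

/-- Index set of `P(z,w₁,w₂) = |z|²(|w₁|⁴ + |w₁² − w₁w₂|² + |w₂|⁴)` expanded in
monomials `z^α z̄^β`. -/
noncomputable def J16 : Finset ((Fin 3 →₀ ℕ) × (Fin 3 →₀ ℕ)) :=
  {(A1, A1), (A1, A2), (A2, A1), (A2, A2), (A3, A3)}

/-- Coefficients of `P(z,w₁,w₂) = |z|²(|w₁|⁴ + |w₁² − w₁w₂|² + |w₂|⁴)`. -/
noncomputable def a16 : (Fin 3 →₀ ℕ) × (Fin 3 →₀ ℕ) → ℂ := fun p =>
  if p = (A1, A1) then 2 else if p = (A1, A2) then -1 else if p = (A2, A1) then -1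
  else if p = (A2, A2) then 1 else if p = (A3, A3) then 1 else 0

@[simp] lemma A1_0 : A1 0 = 1 := by simp [A1]
@[simp] lemma A1_1 : A1 1 = 2 := by simp [A1]
@[simp] lemma A1_2 : A1 2 = 0 := by simp [A1]
@[simp] lemma A2_0 : A2 0 = 1 := by simp [A2]
@[simp] lemma A2_1 : A2 1 = 1 := by simp [A2]
@[simp] lemma A2_2 : A2 2 = 1 := by simp [A2]
@[simp] lemma A3_0 : A3 0 = 1 := by simp [A3]
@[simp] lemma A3_1 : A3 1 = 0 := by simp [A3]
@[simp] lemma A3_2 : A3 2 = 2 := by simp [A3]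

lemma A1_ne_A2 : A1 ≠ A2 := fun h => by
  have := DFunLike.congr_fun h 1; simp at this
lemma A1_ne_A3 : A1 ≠ A3 := fun h => by
  have := DFunLike.congr_fun h 1; simp at this
lemma A2_ne_A3 : A2 ≠ A3 := fun h => by
  have := DFunLike.congr_fun h 1; simp at this

lemma mpow3 (z : Fin 3 → ℂ) (α : Fin 3 →₀ ℕ) :
    mpow z α = z 0 ^ α 0 * z 1 ^ α 1 * z 2 ^ α 2 := by
  simp [mpow, Fin.prod_univ_three]

lemma pval16 (z : Fin 3 → ℂ) :
    pval J16 a16 z = 2 * (z 0 * z 1^2) * conj (z 0 * z 1^2)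
      - (z 0 * z 1^2) * conj (z 0 * z 1 * z 2)
      - (z 0 * z 1 * z 2) * conj (z 0 * z 1^2)
      + (z 0 * z 1 * z 2) * conj (z 0 * z 1 * z 2)
      + (z 0 * z 2^2) * conj (z 0 * z 2^2) := by
  have h12 := A1_ne_A2; have h13 := A1_ne_A3; have h23 := A2_ne_A3
  rw [pval, J16]
  rw [Finset.sum_insert (by simp [h12, h13, h12.symm]),
      Finset.sum_insert (by simp [h12, h13, h23]),
      Finset.sum_insert (by simp [h12, h12.symm, h23]),
      Finset.sum_insert (by simp [h13, h23]),
      Finset.sum_singleton]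
  simp only [a16, mpow3]
  norm_num [A1_ne_A2, A1_ne_A3, A2_ne_A3, A1_ne_A2.symm, A1_ne_A3.symm, A2_ne_A3.symm,
    Prod.ext_iff]
  ring

lemma part1 (z : Fin 3 → ℂ) : pval J16 a16 z =
      (Complex.normSq (z 0) : ℂ) *
        ((Complex.normSq (z 1) : ℂ) ^ 2 + (Complex.normSq (z 1 ^ 2 - z 1 * z 2) : ℂ) +
          (Complex.normSq (z 2) : ℂ) ^ 2) := by
  rw [pval16]
  simp only [← Complex.mul_conj]
  simp only [map_sub, map_mul, map_pow]
  ring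

lemma levi16 (z V : Fin 3 → ℂ) :
    leviForm J16 a16 z V =
      (V 0 * z 1^2 + 2 * z 0 * z 1 * V 1) * conj (V 0 * z 1^2 + 2 * z 0 * z 1 * V 1)
      + (V 0 * (z 1^2 - z 1 * z 2) + z 0 * (2 * z 1 - z 2) * V 1 - z 0 * z 1 * V 2) *
        conj (V 0 * (z 1^2 - z 1 * z 2) + z 0 * (2 * z 1 - z 2) * V 1 - z 0 * z 1 * V 2)
      + (V 0 * z 2^2 + 2 * z 0 * z 2 * V 2) * conj (V 0 * z 2^2 + 2 * z 0 * z 2 * V 2) := by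
  have h12 := A1_ne_A2; have h13 := A1_ne_A3; have h23 := A2_ne_A3
  rw [leviForm, J16]
  rw [Finset.sum_insert (by simp [h12, h13]),
      Finset.sum_insert (by simp [h12, h13, h23]),
      Finset.sum_insert (by simp [h12, h12.symm, h23]),
      Finset.sum_insert (by simp [h13, h23]),
      Finset.sum_singleton]
  simp only [a16, mpow3]
  norm_num [A1_ne_A2, A1_ne_A3, A2_ne_A3, A1_ne_A2.symm, A1_ne_A3.symm, A2_ne_A3.symm,
    Prod.ext_iff, Fin.sum_univ_three, Finsupp.tsub_apply, Finsupp.single_apply]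
  norm_num [Fin.ext_iff]
  simp only [map_add, map_sub, map_mul, map_pow, map_ofNat]
  ring

lemma part2 (z V : Fin 3 → ℂ) : 0 ≤ (leviForm J16 a16 z V).re := by
  rw [levi16]
  simp only [Complex.mul_conj]
  norm_cast
  have := Complex.normSq_nonneg (V 0 * z 1^2 + 2 * z 0 * z 1 * V 1)
  have := Complex.normSq_nonneg (V 0 * (z 1^2 - z 1 * z 2) + z 0 * (2 * z 1 - z 2) * V 1 - z 0 * z 1 * V 2)
  have := Complex.normSq_nonneg (V 0 * z 2^2 + 2 * z 0 * z 2 * V 2)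
  linarith

lemma Pval110 : pval J16 a16 ![1, 1, 0] = 2 := by
  rw [part1]; simp [Matrix.cons_val_two, Matrix.tail_cons, Matrix.head_cons]; norm_num

lemma part3 : ∃ z w : Fin 3 → ℂ, pval J16 a16 z ≠ pval J16 a16 w := by
  refine ⟨![1,1,0], 0, ?_⟩
  rw [Pval110, part1]
  norm_num

lemma memJ16 {p : (Fin 3 →₀ ℕ) × (Fin 3 →₀ ℕ)} (hp : p ∈ J16) :
    p = (A1, A1) ∨ p = (A1, A2) ∨ p = (A2, A1) ∨ p = (A2, A2) ∨ p = (A3, A3) := by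
  simpa [J16] using hp

lemma sumA1 : ∑ i, A1 i = 3 := by simp [Fin.sum_univ_three]
lemma sumA2 : ∑ i, A2 i = 3 := by simp [Fin.sum_univ_three]
lemma sumA3 : ∑ i, A3 i = 3 := by simp [Fin.sum_univ_three]

lemma part4 : ∀ p ∈ J16, (∑ i, p.1 i) + (∑ i, p.2 i) = 6 := by
  intro p hp
  rcases memJ16 hp with h|h|h|h|h <;> subst h <;> simp [sumA1, sumA2, sumA3]

lemma part5 : ∀ p ∈ J16, p.1 0 + p.2 0 = 2 := by
  intro p hp
  rcases memJ16 hp with h|h|h|h|h <;> subst h <;> simp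

lemma part6 : ∀ p ∈ J16, p.1 ≠ 0 ∧ p.2 ≠ 0 := by
  intro p hp
  have h1 : A1 ≠ 0 := fun h => by have := DFunLike.congr_fun h 0; simp at this
  have h2 : A2 ≠ 0 := fun h => by have := DFunLike.congr_fun h 0; simp at this
  have h3 : A3 ≠ 0 := fun h => by have := DFunLike.congr_fun h 0; simp at this
  rcases memJ16 hp with h|h|h|h|h <;> subst h <;> exact ⟨by assumption, by assumption⟩

lemma indep (N : ℕ) (c : ℕ → ℕ → ℂ)
    (h : ∀ s : ℂ, ∑ k ∈ range N, ∑ l ∈ range N, c k l * s ^ k * (conj s) ^ l = 0) :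
    ∀ k0 < N, ∀ l0 < N, c k0 l0 = 0 := by
  intro k0 hk0 l0 hl0
  set M : ℕ := 2 * N + 1 with hM
  have hMpos : (M : ℕ) ≠ 0 := by omega
  set ζ : ℂ := Complex.exp (2 * Real.pi * Complex.I * (M : ℂ)⁻¹) with hζdef
  have hζ : IsPrimitiveRoot ζ M := Complex.isPrimitiveRoot_exp M hMpos
  have hζM : ζ ^ M = 1 := hζ.pow_eq_one
  have habs : ‖ζ‖ = 1 := by
    rw [hζdef, Complex.norm_exp]
    have : (2 * Real.pi * Complex.I * (M : ℂ)⁻¹).re = 0 := by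
      have : ((M : ℂ))⁻¹ = ((M : ℝ)⁻¹ : ℝ) := by push_cast; ring
      rw [this]
      simp [Complex.mul_re, Complex.I_re, Complex.I_im]
    rw [this, Real.exp_zero]
  have hcz : ζ * conj ζ = 1 := by
    rw [Complex.mul_conj]
    norm_cast
    rw [Complex.normSq_eq_norm_sq, habs]; norm_num
  -- geometric sum lemma
  have geo : ∀ a b : ℕ, a < M → b < M →
      ∑ m ∈ range M, (ζ ^ a * (conj ζ) ^ b) ^ m = if a = b then (M : ℂ) else 0 := by
    intro a b ha hb
    by_cases hab : a = b
    · subst hab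
      simp only [if_pos rfl]
      have : ζ ^ a * (conj ζ) ^ a = 1 := by
        rw [← mul_pow, hcz, one_pow]
      simp [this]
    · rw [if_neg hab]
      have hne : ζ ^ a * (conj ζ) ^ b ≠ 1 := by
        intro he
        apply hab
        have : ζ ^ a = ζ ^ b := by
          have := congrArg (fun x => x * ζ ^ b) he
          simp only [one_mul] at this
          calc ζ ^ a = ζ ^ a * ((conj ζ) ^ b * ζ ^ b) := by
                rw [← mul_pow, mul_comm (conj ζ) ζ, hcz, one_pow, mul_one]
            _ = ζ ^ a * (conj ζ) ^ b * ζ ^ b := by ring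
            _ = ζ ^ b := by rw [he, one_mul]
        exact hζ.pow_inj ha hb this
      rw [geom_sum_eq hne]
      have hnum : (ζ ^ a * (conj ζ) ^ b) ^ M = 1 := by
        have h1 : (conj ζ) ^ M = 1 := by
          rw [← map_pow, hζM, map_one]
        rw [mul_pow, ← pow_mul, ← pow_mul, mul_comm a M, mul_comm b M, pow_mul, pow_mul,
          hζM, h1]
        simp
      rw [hnum]
      simp
  -- key radial identity
  have key : ∀ r : ℝ,
      ∑ p ∈ (range N ×ˢ range N).filter (fun p => p.1 + l0 = p.2 + k0),
        c p.1 p.2 * (r : ℂ) ^ (p.1 + p.2) = 0 := by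
    intro r
    have h0 : ∑ m ∈ range M, (conj ζ) ^ (m * k0) * ζ ^ (m * l0) *
        (∑ k ∈ range N, ∑ l ∈ range N,
          c k l * ((r : ℂ) * ζ ^ m) ^ k * (conj ((r : ℂ) * ζ ^ m)) ^ l) = 0 := by
      rw [Finset.sum_eq_zero]
      intro m _
      rw [h ((r : ℂ) * ζ ^ m), mul_zero]
    have e1 : ∑ m ∈ range M, (conj ζ) ^ (m * k0) * ζ ^ (m * l0) *
        (∑ k ∈ range N, ∑ l ∈ range N,
          c k l * ((r : ℂ) * ζ ^ m) ^ k * (conj ((r : ℂ) * ζ ^ m)) ^ l)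
        = ∑ m ∈ range M, ∑ k ∈ range N, ∑ l ∈ range N,
            c k l * (r : ℂ) ^ (k + l) * (ζ ^ (k + l0) * (conj ζ) ^ (l + k0)) ^ m := by
      refine Finset.sum_congr rfl fun m _ => ?_
      rw [Finset.mul_sum]
      refine Finset.sum_congr rfl fun k _ => ?_
      rw [Finset.mul_sum]
      refine Finset.sum_congr rfl fun l _ => ?_
      simp only [map_mul, map_pow, Complex.conj_ofReal, mul_pow, ← pow_mul]
      ring
    have hswap : ∑ m ∈ range M, (conj ζ) ^ (m * k0) * ζ ^ (m * l0) *
        (∑ k ∈ range N, ∑ l ∈ range N,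
          c k l * ((r : ℂ) * ζ ^ m) ^ k * (conj ((r : ℂ) * ζ ^ m)) ^ l)
        = ∑ k ∈ range N, ∑ l ∈ range N, c k l * (r : ℂ) ^ (k + l) *
            ∑ m ∈ range M, (ζ ^ (k + l0) * (conj ζ) ^ (l + k0)) ^ m := by
      rw [e1, Finset.sum_comm]
      refine Finset.sum_congr rfl fun k _ => ?_
      rw [Finset.sum_comm]
      refine Finset.sum_congr rfl fun l _ => ?_
      rw [Finset.mul_sum]
    rw [hswap] at h0
    have hred : ∀ k ∈ range N, ∀ l ∈ range N,
        c k l * (r : ℂ) ^ (k + l) * ∑ m ∈ range M, (ζ ^ (k + l0) * (conj ζ) ^ (l + k0)) ^ m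
        = if k + l0 = l + k0 then (M : ℂ) * (c k l * (r : ℂ) ^ (k + l)) else 0 := by
      intro k hk l hl
      rw [geo (k + l0) (l + k0) (by simp at hk hk0 hl0 ⊢; omega) (by simp at hl hk0 hl0 ⊢; omega)]
      split <;> ring
    calc ∑ p ∈ (range N ×ˢ range N).filter (fun p => p.1 + l0 = p.2 + k0),
          c p.1 p.2 * (r : ℂ) ^ (p.1 + p.2)
        = (M : ℂ)⁻¹ * ∑ p ∈ (range N ×ˢ range N).filter (fun p => p.1 + l0 = p.2 + k0),
            (M : ℂ) * (c p.1 p.2 * (r : ℂ) ^ (p.1 + p.2)) := by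
          rw [Finset.mul_sum]
          apply Finset.sum_congr rfl
          intro p _
          rw [← mul_assoc, inv_mul_cancel₀ (by exact_mod_cast hMpos), one_mul]
      _ = (M : ℂ)⁻¹ * ∑ p ∈ range N ×ˢ range N,
            (if p.1 + l0 = p.2 + k0 then (M : ℂ) * (c p.1 p.2 * (r : ℂ) ^ (p.1 + p.2)) else 0) := by
          rw [Finset.sum_filter]
      _ = (M : ℂ)⁻¹ * ∑ k ∈ range N, ∑ l ∈ range N,
            (if k + l0 = l + k0 then (M : ℂ) * (c k l * (r : ℂ) ^ (k + l)) else 0) := by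
          rw [Finset.sum_product]
      _ = (M : ℂ)⁻¹ * ∑ k ∈ range N, ∑ l ∈ range N, c k l * (r : ℂ) ^ (k + l) *
            ∑ m ∈ range M, (ζ ^ (k + l0) * (conj ζ) ^ (l + k0)) ^ m := by
          congr 1
          apply Finset.sum_congr rfl; intro k hk
          apply Finset.sum_congr rfl; intro l hl
          rw [hred k hk l hl]
      _ = 0 := by rw [h0, mul_zero]
  -- polynomial argument
  set q : Polynomial ℂ := ∑ p ∈ (range N ×ˢ range N).filter (fun p => p.1 + l0 = p.2 + k0),
      Polynomial.C (c p.1 p.2) * Polynomial.X ^ (p.1 + p.2) with hq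
  have hqeval : ∀ r : ℝ, q.eval (r : ℂ) = 0 := by
    intro r
    rw [hq, Polynomial.eval_finset_sum]
    simpa using key r
  have hq0 : q = 0 := by
    apply Polynomial.eq_zero_of_infinite_isRoot
    apply Set.Infinite.mono (s := Set.range (fun r : ℝ => (r : ℂ)))
    · rintro x ⟨r, rfl⟩
      exact hqeval r
    · exact Set.infinite_range_of_injective Complex.ofReal_injective
  have hcoeff := congrArg (fun p => Polynomial.coeff p (k0 + l0)) hq0
  simp only [hq, Polynomial.finset_sum_coeff, Polynomial.coeff_C_mul, Polynomial.coeff_X_pow,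
    Polynomial.coeff_zero] at hcoeff
  rw [Finset.sum_eq_single (k0, l0)] at hcoeff
  · simpa using hcoeff
  · rintro ⟨k, l⟩ hmem hne
    simp only [Finset.mem_filter, Finset.mem_product, Finset.mem_range] at hmem
    have hkl : ¬ (k0 + l0 = k + l) := by
      intro he
      apply hne
      have : k = k0 ∧ l = l0 := by omega
      simp [this.1, this.2]
    rw [if_neg hkl, mul_zero]
  · intro hnm
    exfalso
    apply hnm
    simp only [Finset.mem_filter, Finset.mem_product, Finset.mem_range]
    exact ⟨⟨hk0, hl0⟩, by omega⟩

lemma degsum {n : ℕ} (d : Fin n →₀ ℕ) : ∑ i, d i = d.degree := by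
  rw [Finsupp.degree]
  exact (Finset.sum_subset (Finset.subset_univ _) (by simp)).symm

lemma supp_deg {n : ℕ} {F : MvPolynomial (Fin n) ℂ} {dF : ℕ} (hF : F.IsHomogeneous dF)
    {d : Fin n →₀ ℕ} (hd : d ∈ F.support) : ∑ i, d i = dF := by
  rw [degsum]
  by_contra hne
  exact MvPolynomial.mem_support_iff.mp hd (hF.coeff_eq_zero hne)

lemma eval_smul_hom {n : ℕ} {F : MvPolynomial (Fin n) ℂ} {dF : ℕ} (hF : F.IsHomogeneous dF)
    (t : ℂ) (z : Fin n → ℂ) :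
    MvPolynomial.eval (t • z) F = t ^ dF * MvPolynomial.eval z F := by
  rw [MvPolynomial.eval_eq', MvPolynomial.eval_eq', Finset.mul_sum]
  refine Finset.sum_congr rfl fun d hd => ?_
  have h1 : ∏ i, (t • z) i ^ d i = t ^ (∑ i, d i) * ∏ i, z i ^ d i := by
    simp only [Pi.smul_apply, smul_eq_mul, mul_pow, Finset.prod_mul_distrib,
      Finset.prod_pow_eq_pow_sum]
  rw [h1, supp_deg hF hd]
  ring

lemma mpow_smul {n : ℕ} (t : ℂ) (z : Fin n → ℂ) (α : Fin n →₀ ℕ) :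
    mpow (t • z) α = t ^ (∑ i, α i) * mpow z α := by
  simp only [mpow, Pi.smul_apply, smul_eq_mul, mul_pow, Finset.prod_mul_distrib,
    Finset.prod_pow_eq_pow_sum]

lemma herm_expand (n : ℕ) (h00 h01 h10 h11 : ℂ) (X Y : ℕ → ℂ) (s : ℂ) :
    ∑ k ∈ range n, ∑ l ∈ range n,
      (h00 * (X k * conj (X l)) + h01 * (X k * conj (Y l)) + h10 * (Y k * conj (X l))
        + h11 * (Y k * conj (Y l))) * s ^ k * (conj s) ^ l
    = h00 * ((∑ k ∈ range n, s ^ k * X k) * conj (∑ k ∈ range n, s ^ k * X k))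
    + h01 * ((∑ k ∈ range n, s ^ k * X k) * conj (∑ k ∈ range n, s ^ k * Y k))
    + h10 * ((∑ k ∈ range n, s ^ k * Y k) * conj (∑ k ∈ range n, s ^ k * X k))
    + h11 * ((∑ k ∈ range n, s ^ k * Y k) * conj (∑ k ∈ range n, s ^ k * Y k)) := by
  have hp : ∀ X Y : ℕ → ℂ, (∑ k ∈ range n, s ^ k * X k) * conj (∑ k ∈ range n, s ^ k * Y k)
      = ∑ k ∈ range n, ∑ l ∈ range n, (X k * conj (Y l)) * s ^ k * (conj s) ^ l := by
    intro X Y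
    rw [map_sum, Finset.sum_mul_sum]
    refine Finset.sum_congr rfl fun k _ => Finset.sum_congr rfl fun l _ => ?_
    simp only [map_mul, map_pow]
    ring
  rw [hp X X, hp X Y, hp Y X, hp Y Y]
  simp only [Finset.mul_sum, ← Finset.sum_add_distrib]
  exact Finset.sum_congr rfl fun k _ => Finset.sum_congr rfl fun l _ => by ring

lemma cls2 (α : Fin 2 →₀ ℕ) (h : ∑ i, α i = 1) :
    α = Finsupp.single 0 1 ∨ α = Finsupp.single 1 1 := by
  rw [Fin.sum_univ_two] at h
  have : (α 0 = 1 ∧ α 1 = 0) ∨ (α 0 = 0 ∧ α 1 = 1) := by omega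
  rcases this with ⟨h0, h1⟩ | ⟨h0, h1⟩
  · left; ext i; fin_cases i <;> simp [h0, h1, Finsupp.single_apply]
  · right; ext i; fin_cases i <;> simp [h0, h1, Finsupp.single_apply]

lemma cls3 (d : Fin 3 →₀ ℕ) (h : ∑ i, d i = 1) :
    d = Finsupp.single 0 1 ∨ d = Finsupp.single 1 1 ∨ d = Finsupp.single 2 1 := by
  rw [Fin.sum_univ_three] at h
  have : (d 0 = 1 ∧ d 1 = 0 ∧ d 2 = 0) ∨ (d 0 = 0 ∧ d 1 = 1 ∧ d 2 = 0)
      ∨ (d 0 = 0 ∧ d 1 = 0 ∧ d 2 = 1) := by omega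
  rcases this with ⟨h0,h1,h2⟩ | ⟨h0,h1,h2⟩ | ⟨h0,h1,h2⟩
  · left; ext i; fin_cases i <;> simp [h0, h1, h2, Finsupp.single_apply]
  · right; left; ext i; fin_cases i <;> simp [h0, h1, h2, Finsupp.single_apply]
  · right; right; ext i; fin_cases i <;> simp [h0, h1, h2, Finsupp.single_apply]

lemma single_ne_single {n : ℕ} {i j : Fin n} (h : i ≠ j) :
    (Finsupp.single i 1 : Fin n →₀ ℕ) ≠ Finsupp.single j 1 := by
  intro he
  have := DFunLike.congr_fun he i
  simp only [Finsupp.single_apply, if_pos rfl] at this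
  rw [if_neg (Ne.symm h)] at this
  exact one_ne_zero this

lemma eval_lin {F : MvPolynomial (Fin 3) ℂ} (hF : F.IsHomogeneous 1) (z : Fin 3 → ℂ) :
    MvPolynomial.eval z F = ∑ i, MvPolynomial.coeff (Finsupp.single i 1) F * z i := by
  rw [MvPolynomial.eval_eq']
  have hsub : F.support ⊆ ({Finsupp.single 0 1, Finsupp.single 1 1, Finsupp.single 2 1} :
      Finset (Fin 3 →₀ ℕ)) := by
    intro d hd
    rcases cls3 d (supp_deg hF hd) with h|h|h <;> simp [h]
  rw [Finset.sum_subset hsub ?h0]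
  case h0 =>
    intro d _ hd
    rw [MvPolynomial.notMem_support_iff.mp hd, zero_mul]
  have h01 : (Finsupp.single (0:Fin 3) 1) ≠ Finsupp.single 1 1 := single_ne_single (by decide)
  have h02 : (Finsupp.single (0:Fin 3) 1) ≠ Finsupp.single 2 1 := single_ne_single (by decide)
  have h12 : (Finsupp.single (1:Fin 3) 1) ≠ Finsupp.single 2 1 := single_ne_single (by decide)
  rw [Finset.sum_insert (by simp [h01, h02]), Finset.sum_insert (by simp [h12]),
    Finset.sum_singleton, Fin.sum_univ_three]
  have e0 : ∏ i, z i ^ (Finsupp.single (0:Fin 3) 1) i = z 0 := by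
    simp [Fin.prod_univ_three, Finsupp.single_apply]
  have e1 : ∏ i, z i ^ (Finsupp.single (1:Fin 3) 1) i = z 1 := by
    simp [Fin.prod_univ_three, Finsupp.single_apply]
  have e2 : ∏ i, z i ^ (Finsupp.single (2:Fin 3) 1) i = z 2 := by
    simp [Fin.prod_univ_three, Finsupp.single_apply]
  rw [e0, e1, e2]
  ring

lemma eval_cubic {F : MvPolynomial (Fin 3) ℂ} (hF : F.IsHomogeneous 3) (t w1 w2 : ℂ) :
    MvPolynomial.eval ![t, w1, w2] F
      = ∑ k ∈ range 4, t ^ k *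
          (∑ d ∈ F.support.filter (fun d => d 0 = k),
            MvPolynomial.coeff d F * w1 ^ d 1 * w2 ^ d 2) := by
  rw [MvPolynomial.eval_eq']
  rw [← Finset.sum_fiberwise_of_maps_to (g := fun d : Fin 3 →₀ ℕ => d 0) (t := range 4) ?hm]
  case hm =>
    intro d hd
    have := supp_deg hF hd
    rw [Fin.sum_univ_three] at this
    simp only [Finset.mem_range]
    omega
  refine Finset.sum_congr rfl fun k _ => ?_
  rw [Finset.mul_sum]
  refine Finset.sum_congr rfl fun d hd => ?_
  simp only [Finset.mem_filter] at hd
  rw [Fin.prod_univ_three]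
  simp only [Matrix.cons_val_zero, Matrix.cons_val_one, Matrix.head_cons]
  rw [hd.2, show (![t, w1, w2] : Fin 3 → ℂ) 2 = w2 from rfl]
  ring

lemma quad_coeff {F : MvPolynomial (Fin 3) ℂ} (hF : F.IsHomogeneous 3) (w1 w2 : ℂ) :
    (∑ d ∈ F.support.filter (fun d => d 0 = 1),
        MvPolynomial.coeff d F * w1 ^ d 1 * w2 ^ d 2)
      = MvPolynomial.coeff A1 F * w1 ^ 2 + MvPolynomial.coeff A2 F * (w1 * w2)
        + MvPolynomial.coeff A3 F * w2 ^ 2 := by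
  have hsub : F.support.filter (fun d => d 0 = 1) ⊆ ({A1, A2, A3} : Finset (Fin 3 →₀ ℕ)) := by
    intro d hd
    simp only [Finset.mem_filter] at hd
    have h3 := supp_deg hF hd.1
    rw [Fin.sum_univ_three] at h3
    have h0 := hd.2
    have hcase : (d 1 = 2 ∧ d 2 = 0) ∨ (d 1 = 1 ∧ d 2 = 1) ∨ (d 1 = 0 ∧ d 2 = 2) := by omega
    rcases hcase with ⟨ha, hb⟩|⟨ha, hb⟩|⟨ha, hb⟩
    · have : d = A1 := by ext i; fin_cases i <;> simp [h0, ha, hb]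
      simp [this]
    · have : d = A2 := by ext i; fin_cases i <;> simp [h0, ha, hb]
      simp [this]
    · have : d = A3 := by ext i; fin_cases i <;> simp [h0, ha, hb]
      simp [this]
  have hterm : ∀ d : Fin 3 →₀ ℕ, d 0 = 1 →
      (if d ∈ F.support.filter (fun d => d 0 = 1)
        then MvPolynomial.coeff d F * w1 ^ d 1 * w2 ^ d 2 else 0)
      = MvPolynomial.coeff d F * w1 ^ d 1 * w2 ^ d 2 := by
    intro d hd0
    by_cases hm : d ∈ F.support
    · rw [if_pos (Finset.mem_filter.mpr ⟨hm, hd0⟩)]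
    · rw [if_neg (fun hc => hm (Finset.mem_filter.mp hc).1),
        MvPolynomial.notMem_support_iff.mp hm, zero_mul, zero_mul]
  calc ∑ d ∈ F.support.filter (fun d => d 0 = 1), MvPolynomial.coeff d F * w1 ^ d 1 * w2 ^ d 2
      = ∑ d ∈ F.support.filter (fun d => d 0 = 1),
          (if d ∈ F.support.filter (fun d => d 0 = 1)
            then MvPolynomial.coeff d F * w1 ^ d 1 * w2 ^ d 2 else 0) := by
        refine Finset.sum_congr rfl fun d hd => (if_pos hd).symm
    _ = ∑ d ∈ ({A1, A2, A3} : Finset (Fin 3 →₀ ℕ)),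
          (if d ∈ F.support.filter (fun d => d 0 = 1)
            then MvPolynomial.coeff d F * w1 ^ d 1 * w2 ^ d 2 else 0) :=
        Finset.sum_subset hsub (fun d _ hdn => if_neg hdn)
    _ = MvPolynomial.coeff A1 F * w1 ^ 2 + MvPolynomial.coeff A2 F * (w1 * w2)
        + MvPolynomial.coeff A3 F * w2 ^ 2 := by
      rw [Finset.sum_insert (by simp [A1_ne_A2, A1_ne_A3]),
        Finset.sum_insert (by simp [A2_ne_A3]), Finset.sum_singleton,
        hterm A1 (by simp), hterm A2 (by simp), hterm A3 (by simp)]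
      simp only [A1_1, A1_2, A2_1, A2_2, A3_1, A3_2]
      ring

lemma P_smul (t : ℂ) (z : Fin 3 → ℂ) :
    pval J16 a16 (t • z) = t ^ 3 * (conj t) ^ 3 * pval J16 a16 z := by
  rw [pval16, pval16]
  simp only [Pi.smul_apply, smul_eq_mul, map_mul, map_pow]
  ring

lemma part7 :
    ¬ ∃ (J' : Finset ((Fin 2 →₀ ℕ) × (Fin 2 →₀ ℕ)))
        (b : (Fin 2 →₀ ℕ) × (Fin 2 →₀ ℕ) → ℂ) (dQ : ℕ)
        (F₁ F₂ : MvPolynomial (Fin 3) ℂ) (dF : ℕ),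
        (∀ z V : Fin 2 → ℂ, 0 ≤ (leviForm J' b z V).re) ∧
        (∀ p ∈ J', (p.2, p.1) ∈ J') ∧
        (∀ p : (Fin 2 →₀ ℕ) × (Fin 2 →₀ ℕ), b (p.2, p.1) = conj (b p)) ∧
        (∀ p ∈ J', (∑ i, p.1 i) + (∑ i, p.2 i) = dQ) ∧
        F₁.IsHomogeneous dF ∧ F₂.IsHomogeneous dF ∧
        ∀ z : Fin 3 → ℂ,
          pval J16 a16 z = pval J' b ![MvPolynomial.eval z F₁, MvPolynomial.eval z F₂] := by
  rintro ⟨J', b, dQ, F₁, F₂, dF, -, -, -, hdeg, hF1, hF2, hcomp⟩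
  set N : ℕ := dF * dQ + 4 with hN
  have hS : ∀ z : Fin 3 → ℂ,
      ∑ p ∈ J'.filter (fun p => (dF * ∑ i, p.1 i, dF * ∑ i, p.2 i) = ((3:ℕ), (3:ℕ))),
        b p * mpow ![MvPolynomial.eval z F₁, MvPolynomial.eval z F₂] p.1 *
          conj (mpow ![MvPolynomial.eval z F₁, MvPolynomial.eval z F₂] p.2)
      = pval J16 a16 z := by
    intro z
    set W : Fin 2 → ℂ := ![MvPolynomial.eval z F₁, MvPolynomial.eval z F₂] with hW
    set c : ℕ → ℕ → ℂ := fun k l =>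
      (∑ p ∈ J'.filter (fun p => (dF * ∑ i, p.1 i, dF * ∑ i, p.2 i) = (k, l)),
        b p * mpow W p.1 * conj (mpow W p.2))
      - (if (k, l) = ((3:ℕ), (3:ℕ)) then pval J16 a16 z else 0) with hc
    have hclaim : ∀ s : ℂ, ∑ k ∈ range N, ∑ l ∈ range N, c k l * s ^ k * (conj s) ^ l = 0 := by
      intro s
      have hA : ∑ k ∈ range N, ∑ l ∈ range N,
          (∑ p ∈ J'.filter (fun p => (dF * ∑ i, p.1 i, dF * ∑ i, p.2 i) = (k, l)),
            b p * mpow W p.1 * conj (mpow W p.2)) * s ^ k * (conj s) ^ l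
          = pval J' b ![MvPolynomial.eval (s • z) F₁, MvPolynomial.eval (s • z) F₂] := by
        have hW2 : ![MvPolynomial.eval (s • z) F₁, MvPolynomial.eval (s • z) F₂]
            = (s ^ dF) • W := by
          funext i
          fin_cases i <;>
            simp [eval_smul_hom hF1, eval_smul_hom hF2, hW, Pi.smul_apply, smul_eq_mul]
        rw [pval, hW2]
        have hterm : ∀ p ∈ J', b p * mpow ((s ^ dF) • W) p.1 * conj (mpow ((s ^ dF) • W) p.2)
            = b p * mpow W p.1 * conj (mpow W p.2) * s ^ (dF * ∑ i, p.1 i)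
                * (conj s) ^ (dF * ∑ i, p.2 i) := by
          intro p _
          rw [mpow_smul, mpow_smul]
          simp only [map_mul, map_pow]
          rw [pow_mul, pow_mul]
          ring
        rw [Finset.sum_congr rfl hterm]
        rw [← Finset.sum_fiberwise_of_maps_to
          (g := fun p : (Fin 2 →₀ ℕ) × (Fin 2 →₀ ℕ) => (dF * ∑ i, p.1 i, dF * ∑ i, p.2 i))
          (t := range N ×ˢ range N) ?hmaps]
        case hmaps =>
          intro p hp
          have hdq := hdeg p hp
          have h1 : dF * ∑ i, p.1 i ≤ dF * dQ := Nat.mul_le_mul_left _ (by omega)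
          have h2 : dF * ∑ i, p.2 i ≤ dF * dQ := Nat.mul_le_mul_left _ (by omega)
          simp only [Finset.mem_product, Finset.mem_range]
          omega
        rw [← Finset.sum_product']
        refine Finset.sum_congr rfl fun y _ => ?_
        rw [Finset.sum_mul, Finset.sum_mul]
        refine Finset.sum_congr rfl fun p hp => ?_
        simp only [Finset.mem_filter] at hp
        rw [← hp.2]
      have hB : ∑ k ∈ range N, ∑ l ∈ range N,
          (if (k, l) = ((3:ℕ), (3:ℕ)) then pval J16 a16 z else 0) * s ^ k * (conj s) ^ l
          = s ^ 3 * (conj s) ^ 3 * pval J16 a16 z := by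
        rw [← Finset.sum_product']
        rw [Finset.sum_eq_single ((3:ℕ), (3:ℕ))]
        · simp; ring
        · rintro y - hy
          rw [if_neg hy, zero_mul, zero_mul]
        · intro hnm
          exfalso
          apply hnm
          simp only [Finset.mem_product, Finset.mem_range]
          omega
      have hsplit : ∑ k ∈ range N, ∑ l ∈ range N, c k l * s ^ k * (conj s) ^ l
          = (∑ k ∈ range N, ∑ l ∈ range N,
              (∑ p ∈ J'.filter (fun p => (dF * ∑ i, p.1 i, dF * ∑ i, p.2 i) = (k, l)),
                b p * mpow W p.1 * conj (mpow W p.2)) * s ^ k * (conj s) ^ l)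
            - ∑ k ∈ range N, ∑ l ∈ range N,
              (if (k, l) = ((3:ℕ), (3:ℕ)) then pval J16 a16 z else 0) * s ^ k * (conj s) ^ l := by
        rw [← Finset.sum_sub_distrib]
        refine Finset.sum_congr rfl fun k _ => ?_
        rw [← Finset.sum_sub_distrib]
        refine Finset.sum_congr rfl fun l _ => ?_
        rw [hc]
        ring
      rw [hsplit, hA, hB, ← hcomp (s • z), P_smul]
      ring
    have h33 := indep N c hclaim 3 (by omega) 3 (by omega)
    rw [hc] at h33
    simp only [if_pos rfl, sub_eq_zero] at h33
    exact h33
  rcases em (dF = 1) with hdF1 | hdF1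
  · -- dF = 1 : compose with linear forms
    subst hdF1
    set u : Fin 3 → ℂ := fun i => MvPolynomial.coeff (Finsupp.single i 1) F₁ with hu
    set v : Fin 3 → ℂ := fun i => MvPolynomial.coeff (Finsupp.single i 1) F₂ with hv
    have hlin1 : ∀ z : Fin 3 → ℂ, MvPolynomial.eval z F₁ = ∑ i, u i * z i :=
      fun z => eval_lin hF1 z
    have hlin2 : ∀ z : Fin 3 → ℂ, MvPolynomial.eval z F₂ = ∑ i, v i * z i :=
      fun z => eval_lin hF2 z
    set L : (Fin 3 → ℂ) →ₗ[ℂ] (Fin 2 → ℂ) :=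
      { toFun := fun z => ![∑ i, u i * z i, ∑ i, v i * z i],
        map_add' := by
          intro x y
          funext j
          fin_cases j <;> simp [Fin.sum_univ_three] <;> ring
        map_smul' := by
          intro m x
          funext j
          fin_cases j <;> simp [Fin.sum_univ_three, smul_eq_mul] <;> ring } with hL
    have hker : LinearMap.ker L ≠ ⊥ := by
      intro hbot
      have hinj : Function.Injective L := LinearMap.ker_eq_bot.mp hbot
      have hle := LinearMap.finrank_le_finrank_of_injective hinj
      simp [Module.finrank_pi] at hle
    obtain ⟨w, hwmem, hwne⟩ := (Submodule.ne_bot_iff _).mp hker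
    have hw1 : u 0 * w 0 + u 1 * w 1 + u 2 * w 2 = 0 := by
      have h' := congrFun (LinearMap.mem_ker.mp hwmem) 0
      simpa [hL, Fin.sum_univ_three] using h'
    have hw2 : v 0 * w 0 + v 1 * w 1 + v 2 * w 2 = 0 := by
      have h' := congrFun (LinearMap.mem_ker.mp hwmem) 1
      simpa [hL, Fin.sum_univ_three] using h'
    have hinv : ∀ (z : Fin 3 → ℂ) (t : ℂ), pval J16 a16 (z + t • w) = pval J16 a16 z := by
      intro z t
      rw [hcomp, hcomp]
      congr 1
      funext j
      fin_cases j
      · show MvPolynomial.eval (z + t • w) F₁ = MvPolynomial.eval z F₁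
        rw [hlin1, hlin1]
        simp only [Pi.add_apply, Pi.smul_apply, smul_eq_mul, Fin.sum_univ_three]
        linear_combination t * hw1
      · show MvPolynomial.eval (z + t • w) F₂ = MvPolynomial.eval z F₂
        rw [hlin2, hlin2]
        simp only [Pi.add_apply, Pi.smul_apply, smul_eq_mul, Fin.sum_univ_three]
        linear_combination t * hw2
    have h100 : pval J16 a16 ![(1:ℂ),0,0] = 0 := by rw [part1]; simp [Matrix.cons_val_two, Matrix.tail_cons, Matrix.head_cons]
    have hval : ∀ t : ℂ, (Complex.normSq (1 + t * w 0) : ℂ) *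
        ((Complex.normSq (t * w 1) : ℂ)^2
          + (Complex.normSq ((t * w 1)^2 - (t * w 1) * (t * w 2)) : ℂ)
          + (Complex.normSq (t * w 2) : ℂ)^2) = 0 := by
      intro t
      have h' := hinv ![(1:ℂ),0,0] t
      rw [h100, part1] at h'
      simpa [Pi.add_apply, Pi.smul_apply, smul_eq_mul] using h'
    have hval1 := hval 1
    simp only [one_mul] at hval1
    have hvalm' := hval (-1)
    rw [show (1:ℂ) + (-1) * w 0 = 1 - w 0 from by ring,
      show (-1:ℂ) * w 1 = -(w 1) from by ring,
      show (-1:ℂ) * w 2 = -(w 2) from by ring,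
      show (-(w 1))^2 - (-(w 1)) * (-(w 2)) = (w 1)^2 - w 1 * w 2 from by ring,
      Complex.normSq_neg, Complex.normSq_neg] at hvalm'
    by_cases hrho : (Complex.normSq (w 1))^2
        + Complex.normSq ((w 1)^2 - (w 1) * (w 2)) + (Complex.normSq (w 2))^2 = 0
    · -- w 1 = w 2 = 0, so w 0 ≠ 0
      have hn1 := Complex.normSq_nonneg (w 1)
      have hn2 := Complex.normSq_nonneg (w 2)
      have hn3 := Complex.normSq_nonneg ((w 1)^2 - (w 1) * (w 2))
      have hA2 : (Complex.normSq (w 1))^2 = 0 := by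
        nlinarith [sq_nonneg (Complex.normSq (w 1)), sq_nonneg (Complex.normSq (w 2)), hn3]
      have hC2 : (Complex.normSq (w 2))^2 = 0 := by
        nlinarith [sq_nonneg (Complex.normSq (w 1)), sq_nonneg (Complex.normSq (w 2)), hn3]
      have hw1z : w 1 = 0 := by
        rw [← Complex.normSq_eq_zero]
        exact pow_eq_zero_iff (two_ne_zero) |>.mp hA2
      have hw2z : w 2 = 0 := by
        rw [← Complex.normSq_eq_zero]
        exact pow_eq_zero_iff (two_ne_zero) |>.mp hC2
      have hw0 : w 0 ≠ 0 := by
        intro h0'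
        apply hwne
        funext i
        fin_cases i <;> simp [h0', hw1z, hw2z]
      have h010 : pval J16 a16 ![(0:ℂ),1,0] = 0 := by rw [part1]; norm_num
      have h2 := hinv ![(0:ℂ),1,0] 1
      rw [h010, part1] at h2
      simp [Pi.add_apply, Pi.smul_apply, smul_eq_mul, hw1z, hw2z] at h2
      exact hw0 (by tauto)
    · -- second factor nonzero, so both 1 + w0 = 0 and 1 - w0 = 0
      have hfac : ((Complex.normSq (w 1) : ℂ)^2
          + (Complex.normSq ((w 1)^2 - (w 1) * (w 2)) : ℂ)
          + (Complex.normSq (w 2) : ℂ)^2) ≠ 0 := by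
        intro h'
        apply hrho
        have : (((Complex.normSq (w 1))^2
            + Complex.normSq ((w 1)^2 - (w 1) * (w 2)) + (Complex.normSq (w 2))^2 : ℝ) : ℂ)
            = 0 := by push_cast; linear_combination h'
        exact_mod_cast this
      have e1 : (Complex.normSq (1 + w 0) : ℂ) = 0 := by
        rcases mul_eq_zero.mp hval1 with h' | h'
        · exact h'
        · exact absurd h' hfac
      have e2 : (Complex.normSq (1 - w 0) : ℂ) = 0 := by
        rcases mul_eq_zero.mp hvalm' with h' | h'
        · exact h'
        · exact absurd h' hfac
      have f1 : (1 : ℂ) + w 0 = 0 := by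
        rw [← Complex.normSq_eq_zero]
        exact_mod_cast e1
      have f2 : (1 : ℂ) - w 0 = 0 := by
        rw [← Complex.normSq_eq_zero]
        exact_mod_cast e2
      have : (2 : ℂ) = 0 := by linear_combination f1 + f2
      norm_num at this
  rcases em (dF = 3) with hdF3 | hdF3
  · -- dF = 3 : quadratic Q, Hermitian form
    subst hdF3
    set e : Fin 2 → (Fin 2 →₀ ℕ) := fun i => Finsupp.single i 1 with he
    have hene : e 0 ≠ e 1 := single_ne_single (by decide)
    set h00 : ℂ := if (e 0, e 0) ∈ J' then b (e 0, e 0) else 0 with hh00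
    set h01 : ℂ := if (e 0, e 1) ∈ J' then b (e 0, e 1) else 0 with hh01
    set h10 : ℂ := if (e 1, e 0) ∈ J' then b (e 1, e 0) else 0 with hh10
    set h11 : ℂ := if (e 1, e 1) ∈ J' then b (e 1, e 1) else 0 with hh11
    have hHerm : ∀ z : Fin 3 → ℂ, pval J16 a16 z =
        h00 * (MvPolynomial.eval z F₁ * conj (MvPolynomial.eval z F₁))
      + h01 * (MvPolynomial.eval z F₁ * conj (MvPolynomial.eval z F₂))
      + h10 * (MvPolynomial.eval z F₂ * conj (MvPolynomial.eval z F₁))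
      + h11 * (MvPolynomial.eval z F₂ * conj (MvPolynomial.eval z F₂)) := by
      intro z
      rw [← hS z]
      set W : Fin 2 → ℂ := ![MvPolynomial.eval z F₁, MvPolynomial.eval z F₂] with hW
      set f : (Fin 2 →₀ ℕ) × (Fin 2 →₀ ℕ) → ℂ :=
        fun p => b p * mpow W p.1 * conj (mpow W p.2) with hf
      set Jf := J'.filter
        (fun p : (Fin 2 →₀ ℕ) × (Fin 2 →₀ ℕ) =>
          ((3:ℕ) * ∑ i, p.1 i, (3:ℕ) * ∑ i, p.2 i) = ((3:ℕ), (3:ℕ))) with hJf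
      have hsub : Jf ⊆ ({(e 0, e 0), (e 0, e 1), (e 1, e 0), (e 1, e 1)} :
          Finset ((Fin 2 →₀ ℕ) × (Fin 2 →₀ ℕ))) := by
        intro p hp
        simp only [hJf, Finset.mem_filter, Prod.mk.injEq] at hp
        have h1 : ∑ i, p.1 i = 1 := by omega
        have h2 : ∑ i, p.2 i = 1 := by omega
        have hps : p = (p.1, p.2) := rfl
        rcases cls2 p.1 h1 with ha|ha <;> rcases cls2 p.2 h2 with hb|hb <;>
          rw [hps, ha, hb] <;> simp [he]
      have hmemiff : ∀ i j : Fin 2, ((e i, e j) ∈ Jf) ↔ ((e i, e j) ∈ J') := by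
        intro i j
        fin_cases i <;> fin_cases j <;>
          simp [hJf, Finset.mem_filter, he, Finsupp.single_apply, Fin.sum_univ_two,
            Fin.ext_iff]
      have hmpow : ∀ i : Fin 2, mpow W (e i) = W i := by
        intro i
        fin_cases i <;>
          simp [mpow, Fin.prod_univ_two, he, Finsupp.single_apply]
      have hterm : ∀ i j : Fin 2,
          (if (e i, e j) ∈ Jf then f (e i, e j) else 0)
          = (if (e i, e j) ∈ J' then b (e i, e j) else 0) * (W i * conj (W j)) := by
        intro i j
        by_cases hm : (e i, e j) ∈ J'
        · rw [if_pos ((hmemiff i j).mpr hm), if_pos hm, hf]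
          simp only [hmpow]
          ring
        · rw [if_neg (fun hc => hm ((hmemiff i j).mp hc)), if_neg hm, zero_mul]
      have hstep : ∑ p ∈ Jf, f p
          = ∑ p ∈ ({(e 0, e 0), (e 0, e 1), (e 1, e 0), (e 1, e 1)} :
              Finset ((Fin 2 →₀ ℕ) × (Fin 2 →₀ ℕ))), (if p ∈ Jf then f p else 0) := by
        rw [← Finset.sum_subset hsub (fun p _ hpn => if_neg hpn)]
        exact Finset.sum_congr rfl fun p hp => (if_pos hp).symm
      have hne1 : ((e 0, e 0) : (Fin 2 →₀ ℕ) × (Fin 2 →₀ ℕ)) ∉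
          ({(e 0, e 1), (e 1, e 0), (e 1, e 1)} :
            Finset ((Fin 2 →₀ ℕ) × (Fin 2 →₀ ℕ))) := by
        simp [Prod.ext_iff, hene, hene.symm]
      have hne2 : ((e 0, e 1) : (Fin 2 →₀ ℕ) × (Fin 2 →₀ ℕ)) ∉
          ({(e 1, e 0), (e 1, e 1)} : Finset ((Fin 2 →₀ ℕ) × (Fin 2 →₀ ℕ))) := by
        simp [Prod.ext_iff, hene, hene.symm]
      have hne3 : ((e 1, e 0) : (Fin 2 →₀ ℕ) × (Fin 2 →₀ ℕ)) ∉
          ({(e 1, e 1)} : Finset ((Fin 2 →₀ ℕ) × (Fin 2 →₀ ℕ))) := by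
        simp [Prod.ext_iff, hene, hene.symm]
      rw [hstep, Finset.sum_insert hne1, Finset.sum_insert hne2, Finset.sum_insert hne3,
        Finset.sum_singleton, hterm 0 0, hterm 0 1, hterm 1 0, hterm 1 1]
      have hW0 : W 0 = MvPolynomial.eval z F₁ := rfl
      have hW1 : W 1 = MvPolynomial.eval z F₂ := rfl
      rw [hW0, hW1, ← hh00, ← hh01, ← hh10, ← hh11]
      ring
    -- coefficients of the quadratics
    set q10 : ℂ := MvPolynomial.coeff A1 F₁ with hq10
    set q11 : ℂ := MvPolynomial.coeff A2 F₁ with hq11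
    set q12 : ℂ := MvPolynomial.coeff A3 F₁ with hq12
    set q20 : ℂ := MvPolynomial.coeff A1 F₂ with hq20
    set q21 : ℂ := MvPolynomial.coeff A2 F₂ with hq21
    set q22 : ℂ := MvPolynomial.coeff A3 F₂ with hq22
    have hGram : ∀ w1 w2 : ℂ,
        h00 * ((q10 * w1 ^ 2 + q11 * (w1 * w2) + q12 * w2 ^ 2)
            * conj (q10 * w1 ^ 2 + q11 * (w1 * w2) + q12 * w2 ^ 2))
      + h01 * ((q10 * w1 ^ 2 + q11 * (w1 * w2) + q12 * w2 ^ 2)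
            * conj (q20 * w1 ^ 2 + q21 * (w1 * w2) + q22 * w2 ^ 2))
      + h10 * ((q20 * w1 ^ 2 + q21 * (w1 * w2) + q22 * w2 ^ 2)
            * conj (q10 * w1 ^ 2 + q11 * (w1 * w2) + q12 * w2 ^ 2))
      + h11 * ((q20 * w1 ^ 2 + q21 * (w1 * w2) + q22 * w2 ^ 2)
            * conj (q20 * w1 ^ 2 + q21 * (w1 * w2) + q22 * w2 ^ 2))
        = (Complex.normSq w1 : ℂ) ^ 2 + (Complex.normSq (w1 ^ 2 - w1 * w2) : ℂ)
          + (Complex.normSq w2 : ℂ) ^ 2 := by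
      intro w1 w2
      set G1 : ℕ → ℂ := fun k => ∑ d ∈ F₁.support.filter (fun d => d 0 = k),
        MvPolynomial.coeff d F₁ * w1 ^ d 1 * w2 ^ d 2 with hG1
      set G2 : ℕ → ℂ := fun k => ∑ d ∈ F₂.support.filter (fun d => d 0 = k),
        MvPolynomial.coeff d F₂ * w1 ^ d 1 * w2 ^ d 2 with hG2
      set ρ : ℂ := (Complex.normSq w1 : ℂ) ^ 2 + (Complex.normSq (w1 ^ 2 - w1 * w2) : ℂ)
          + (Complex.normSq w2 : ℂ) ^ 2 with hρ
      set c : ℕ → ℕ → ℂ := fun k l =>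
        (h00 * (G1 k * conj (G1 l)) + h01 * (G1 k * conj (G2 l))
          + h10 * (G2 k * conj (G1 l)) + h11 * (G2 k * conj (G2 l)))
        - (if (k, l) = ((1:ℕ), (1:ℕ)) then ρ else 0) with hc2
      have hclaim : ∀ s : ℂ,
          ∑ k ∈ range 4, ∑ l ∈ range 4, c k l * s ^ k * (conj s) ^ l = 0 := by
        intro s
        have hsplit : ∑ k ∈ range 4, ∑ l ∈ range 4, c k l * s ^ k * (conj s) ^ l
            = (∑ k ∈ range 4, ∑ l ∈ range 4,
                (h00 * (G1 k * conj (G1 l)) + h01 * (G1 k * conj (G2 l))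
                  + h10 * (G2 k * conj (G1 l)) + h11 * (G2 k * conj (G2 l)))
                  * s ^ k * (conj s) ^ l)
              - ∑ k ∈ range 4, ∑ l ∈ range 4,
                (if (k, l) = ((1:ℕ), (1:ℕ)) then ρ else 0) * s ^ k * (conj s) ^ l := by
          rw [← Finset.sum_sub_distrib]
          refine Finset.sum_congr rfl fun k _ => ?_
          rw [← Finset.sum_sub_distrib]
          refine Finset.sum_congr rfl fun l _ => ?_
          rw [hc2]
          ring
        have hBpart : ∑ k ∈ range 4, ∑ l ∈ range 4,
            (if (k, l) = ((1:ℕ), (1:ℕ)) then ρ else 0) * s ^ k * (conj s) ^ l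
            = s * conj s * ρ := by
          rw [← Finset.sum_product']
          rw [Finset.sum_eq_single ((1:ℕ), (1:ℕ))]
          · simp; ring
          · rintro y - hy
            rw [if_neg hy, zero_mul, zero_mul]
          · intro hnm
            exfalso
            apply hnm
            simp only [Finset.mem_product, Finset.mem_range]
            omega
        have hApart := herm_expand 4 h00 h01 h10 h11 G1 G2 s
        have hev1 : ∑ k ∈ range 4, s ^ k * G1 k = MvPolynomial.eval ![s, w1, w2] F₁ :=
          (eval_cubic hF1 s w1 w2).symm
        have hev2 : ∑ k ∈ range 4, s ^ k * G2 k = MvPolynomial.eval ![s, w1, w2] F₂ :=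
          (eval_cubic hF2 s w1 w2).symm
        rw [hsplit, hBpart, hApart, hev1, hev2, ← hHerm ![s, w1, w2], part1]
        have hz0 : (![s, w1, w2] : Fin 3 → ℂ) 0 = s := rfl
        have hz1 : (![s, w1, w2] : Fin 3 → ℂ) 1 = w1 := rfl
        have hz2 : (![s, w1, w2] : Fin 3 → ℂ) 2 = w2 := rfl
        rw [hz0, hz1, hz2, hρ]
        rw [show (Complex.normSq s : ℂ) = s * conj s from (Complex.mul_conj s).symm]
        ring
      have h11key := indep 4 c hclaim 1 (by omega) 1 (by omega)
      rw [hc2] at h11key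
      simp only [if_pos rfl, sub_eq_zero] at h11key
      have hq1 : G1 1 = q10 * w1 ^ 2 + q11 * (w1 * w2) + q12 * w2 ^ 2 := by
        rw [hG1]
        exact quad_coeff hF1 w1 w2
      have hq2 : G2 1 = q20 * w1 ^ 2 + q21 * (w1 * w2) + q22 * w2 ^ 2 := by
        rw [hG2]
        exact quad_coeff hF2 w1 w2
      rw [hq1, hq2] at h11key
      exact h11key
    -- specialize to the curve (s, s³) and extract Gram entries
    set u1 : ℕ → ℂ := fun k =>
      if k = 2 then q10 else if k = 4 then q11 else if k = 6 then q12 else 0 with hu1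
    set u2 : ℕ → ℂ := fun k =>
      if k = 2 then q20 else if k = 4 then q21 else if k = 6 then q22 else 0 with hu2
    set τ : ℕ → ℕ → ℂ := fun k l =>
      if k = 2 ∧ l = 2 then 2 else if k = 2 ∧ l = 4 then -1 else if k = 4 ∧ l = 2 then -1
      else if k = 4 ∧ l = 4 then 1 else if k = 6 ∧ l = 6 then 1 else 0 with hτ
    set c2 : ℕ → ℕ → ℂ := fun k l =>
      (h00 * (u1 k * conj (u1 l)) + h01 * (u1 k * conj (u2 l))
        + h10 * (u2 k * conj (u1 l)) + h11 * (u2 k * conj (u2 l))) - τ k l with hc3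
    have hclaim2 : ∀ s : ℂ,
        ∑ k ∈ range 7, ∑ l ∈ range 7, c2 k l * s ^ k * (conj s) ^ l = 0 := by
      intro s
      have hsplit : ∑ k ∈ range 7, ∑ l ∈ range 7, c2 k l * s ^ k * (conj s) ^ l
          = (∑ k ∈ range 7, ∑ l ∈ range 7,
              (h00 * (u1 k * conj (u1 l)) + h01 * (u1 k * conj (u2 l))
                + h10 * (u2 k * conj (u1 l)) + h11 * (u2 k * conj (u2 l)))
                * s ^ k * (conj s) ^ l)
            - ∑ k ∈ range 7, ∑ l ∈ range 7, τ k l * s ^ k * (conj s) ^ l := by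
        rw [← Finset.sum_sub_distrib]
        refine Finset.sum_congr rfl fun k _ => ?_
        rw [← Finset.sum_sub_distrib]
        refine Finset.sum_congr rfl fun l _ => ?_
        rw [hc3]
        ring
      have hApart := herm_expand 7 h00 h01 h10 h11 u1 u2 s
      have hu1sum : ∑ k ∈ range 7, s ^ k * u1 k
          = q10 * s ^ 2 + q11 * (s * s ^ 3) + q12 * (s ^ 3) ^ 2 := by
        rw [hu1]
        simp [Finset.sum_range_succ]
        ring
      have hu2sum : ∑ k ∈ range 7, s ^ k * u2 k
          = q20 * s ^ 2 + q21 * (s * s ^ 3) + q22 * (s ^ 3) ^ 2 := by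
        rw [hu2]
        simp [Finset.sum_range_succ]
        ring
      have hτsum : ∑ k ∈ range 7, ∑ l ∈ range 7, τ k l * s ^ k * (conj s) ^ l
          = 2 * s ^ 2 * (conj s) ^ 2 - s ^ 2 * (conj s) ^ 4 - s ^ 4 * (conj s) ^ 2
            + s ^ 4 * (conj s) ^ 4 + s ^ 6 * (conj s) ^ 6 := by
        rw [hτ]
        simp [Finset.sum_range_succ]
        ring
      have hGs := hGram s (s ^ 3)
      have hρs : (Complex.normSq s : ℂ) ^ 2 + (Complex.normSq (s ^ 2 - s * s ^ 3) : ℂ)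
          + (Complex.normSq (s ^ 3) : ℂ) ^ 2
          = 2 * s ^ 2 * (conj s) ^ 2 - s ^ 2 * (conj s) ^ 4 - s ^ 4 * (conj s) ^ 2
            + s ^ 4 * (conj s) ^ 4 + s ^ 6 * (conj s) ^ 6 := by
        simp only [← Complex.mul_conj]
        simp only [map_sub, map_mul, map_pow]
        ring
      rw [hsplit, hApart, hu1sum, hu2sum, hτsum]
      rw [show (s:ℂ) ^ 2 = s ^ 2 from rfl] -- no-op
      rw [hGs, hρs]
      ring
    have haa := indep 7 c2 hclaim2 2 (by omega) 2 (by omega)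
    have hab := indep 7 c2 hclaim2 2 (by omega) 4 (by omega)
    have hba := indep 7 c2 hclaim2 4 (by omega) 2 (by omega)
    have hbb := indep 7 c2 hclaim2 4 (by omega) 4 (by omega)
    have hac := indep 7 c2 hclaim2 2 (by omega) 6 (by omega)
    have hbc := indep 7 c2 hclaim2 4 (by omega) 6 (by omega)
    have hcc := indep 7 c2 hclaim2 6 (by omega) 6 (by omega)
    rw [hc3] at haa hab hba hbb hac hbc hcc
    simp only [hu1, hu2, hτ] at haa hab hba hbb hac hbc hcc
    norm_num at haa hab hba hbb hac hbc hcc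
    -- haa : ⟨a,a⟩ = 2, hab : ⟨a,b⟩ = -1, hba, hbb, hac, hbc, hcc
    have hD : q10 * q21 - q20 * q11 = 0 := by
      linear_combination (-(q11 * q22 - q21 * q12)) * hac + (q10 * q22 - q20 * q12) * hbc
        - (q10 * q21 - q20 * q11) * hcc
    have hone : (1 : ℂ) = 0 := by
      linear_combination
        (-(h00 * (q11 * conj q11) + h01 * (q11 * conj q21) + h10 * (q21 * conj q11)
          + h11 * (q21 * conj q21))) * haa
        + (-2 : ℂ) * hbb
        + (h00 * (q11 * conj q10) + h01 * (q11 * conj q20) + h10 * (q21 * conj q10)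
          + h11 * (q21 * conj q20)) * hab
        + (-1 : ℂ) * hba
        + ((h00 * h11 - h01 * h10) * (conj q10 * conj q21 - conj q20 * conj q11)) * hD
    exact one_ne_zero hone
  · -- dF does not divide 3 : the (3,3) part is empty
    have hempty : ∀ z : Fin 3 → ℂ, pval J16 a16 z = 0 := by
      intro z
      rw [← hS z]
      apply Finset.sum_eq_zero
      intro p hp
      simp only [Finset.mem_filter, Prod.mk.injEq] at hp
      exfalso
      have h3 : dF ∣ 3 := ⟨_, hp.2.1.symm⟩
      have hle3 := Nat.le_of_dvd (by norm_num) h3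
      have h31 := hp.2.1
      interval_cases dF <;> omega
    have h2 := hempty ![1,1,0]
    rw [Pval110] at h2
    norm_num at h2

/-- `P(z,w₁,w₂) = |z|²(|w₁|⁴ + |w₁² − w₁w₂|² + |w₂|⁴)` is a non-constant
homogeneous plurisubharmonic polynomial without pluriharmonic terms, homogeneous of
degree `2` in `(z, z̄)`, and there do NOT exist a homogeneous plurisubharmonic polynomial
`Q : ℂ² → ℝ` and holomorphic polynomials `F₁, F₂ : ℂ³ → ℂ` homogeneous of the same degree
with `P = Q ∘ (F₁, F₂)`. -/
theorem stmt16 :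
    (∀ z : Fin 3 → ℂ, pval J16 a16 z =
      (Complex.normSq (z 0) : ℂ) *
        ((Complex.normSq (z 1) : ℂ) ^ 2 + (Complex.normSq (z 1 ^ 2 - z 1 * z 2) : ℂ) +
          (Complex.normSq (z 2) : ℂ) ^ 2)) ∧
    (∀ z V : Fin 3 → ℂ, 0 ≤ (leviForm J16 a16 z V).re) ∧
    (∃ z w : Fin 3 → ℂ, pval J16 a16 z ≠ pval J16 a16 w) ∧
    (∀ p ∈ J16, (∑ i, p.1 i) + (∑ i, p.2 i) = 6) ∧
    (∀ p ∈ J16, p.1 0 + p.2 0 = 2) ∧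
    (∀ p ∈ J16, p.1 ≠ 0 ∧ p.2 ≠ 0) ∧
    ¬ ∃ (J' : Finset ((Fin 2 →₀ ℕ) × (Fin 2 →₀ ℕ)))
        (b : (Fin 2 →₀ ℕ) × (Fin 2 →₀ ℕ) → ℂ) (dQ : ℕ)
        (F₁ F₂ : MvPolynomial (Fin 3) ℂ) (dF : ℕ),
        (∀ z V : Fin 2 → ℂ, 0 ≤ (leviForm J' b z V).re) ∧
        (∀ p ∈ J', (p.2, p.1) ∈ J') ∧
        (∀ p : (Fin 2 →₀ ℕ) × (Fin 2 →₀ ℕ), b (p.2, p.1) = conj (b p)) ∧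
        (∀ p ∈ J', (∑ i, p.1 i) + (∑ i, p.2 i) = dQ) ∧
        F₁.IsHomogeneous dF ∧ F₂.IsHomogeneous dF ∧
        ∀ z : Fin 3 → ℂ,
          pval J16 a16 z = pval J' b ![MvPolynomial.eval z F₁, MvPolynomial.eval z F₂] := by
  exact ⟨part1, part2, part3, part4, part5, part6, part7⟩
end

section
/- Let P: C^n → R be a plurisubharmonic polynomial, homogeneous of degree 2k, without pluriharmonic terms, and write P(z) = Σ_{β:1≤|β|≤2k−1} z̄^β P_β(z) with P_β holomorphic homogeneous of degree 2k−|β|. Suppose h: C^n → C is a nonzero holomorphic homogeneous polynomial such that for every β either P_β ≡ 0 or (2k−|β|)/deg h is a positive integer and P_β = c_β·h^{(2k−|β|)/deg h} for some constant c_β ∈ C. If additionally P is not identically zero, then 2k/deg h is an integer, and there exists a function s: C → R of the form s(τ) = Σ_{l=1}^L γ_l·τ̄^l·τ^{2k/deg h − l} with γ_l ∈ C such that P = s ∘ h on C^n. -/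
open Finset
open scoped ComplexConjugate

/-!
Collecting the monomials `z̄^β` of equal degree `d = |β|` writes
`P(z) = ∑_d A_d(z̄) h(z)^{(2k - d)/dh}` with `A_d` homogeneous of degree `d`.
Since `P` is real, its polarization `Q(ζ, η) = ∑_d A_d(η) h(ζ)^{(2k - d)/dh}` satisfies
`Q(ζ, η) = conj Q(η̄, ζ̄)`: the difference is a polynomial vanishing on the totally real diagonal
`η = ζ̄`, hence everywhere. Replacing `ζ` by `t ζ` and comparing powers of `t` matches the term of
index `d` with the conjugate of the term of index `2k - d`. At a point `ζ₀` with `h(ζ₀) ≠ 0` this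
gives `A_d(z̄) = c_d · conj(h(z))^{d/dh}`, and a nonvanishing term of `P` forces `dh ∣ d` and
`dh ∣ 2k - d`, whence `dh ∣ 2k`.
-/

open MvPolynomial

namespace MvPolynomial

variable {σ : Type*}

theorem eval_bind₁ {R τ : Type*} [CommSemiring R] (x : τ → R) (f : σ → MvPolynomial τ R)
    (F : MvPolynomial σ R) : eval x (bind₁ f F) = eval (fun i => eval x (f i)) F :=
  eval₂Hom_bind₁ (RingHom.id R) x f F

theorem eq_zero_of_eval_ofReal_eq_zero {p : MvPolynomial σ ℂ}
    (hp : ∀ x : σ → ℝ, eval (fun i => (x i : ℂ)) p = 0) : p = 0 := by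
  refine funext_set (fun _ => Set.range ((↑) : ℝ → ℂ))
    (fun _ => Set.infinite_range_of_injective Complex.ofReal_injective) fun z hz => ?_
  choose x hx using fun i => hz i (Set.mem_univ i)
  rw [map_zero, ← hp x]
  simp only [hx]

theorem eq_zero_of_eval_sumElim_conj_eq_zero {F : MvPolynomial (σ ⊕ σ) ℂ}
    (hF : ∀ z : σ → ℂ, eval (Sum.elim z (conj ∘ z)) F = 0) : F = 0 := by
  -- in the real coordinates `ζ = x + i y`, `η = x - i y` the polynomial vanishes on `ℝ^σ × ℝ^σ`
  set G := bind₁ (Sum.elim (fun j => X (Sum.inl j) + C Complex.I * X (Sum.inr j))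
    (fun j => X (Sum.inl j) - C Complex.I * X (Sum.inr j))) F
  have hG : G = 0 := eq_zero_of_eval_ofReal_eq_zero fun x => by
    convert hF fun j => x (Sum.inl j) + Complex.I * x (Sum.inr j) using 1
    rw [eval_bind₁]
    congr 2
    funext i
    rcases i with j | j <;> simp [sub_eq_add_neg]
  refine funext fun v => ?_
  have := congrArg (eval (Sum.elim (fun j => (v (Sum.inl j) + v (Sum.inr j)) / 2)
    (fun j => (v (Sum.inl j) - v (Sum.inr j)) / (2 * Complex.I)))) hG
  rw [eval_bind₁, map_zero] at this
  rw [map_zero, ← this]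
  congr 2
  funext i
  rcases i with j | j <;> simp <;> field_simp <;> ring

theorem eval_sumElim_eq_conj_of_conj_eval_diag {F : MvPolynomial (σ ⊕ σ) ℂ}
    (hF : ∀ z : σ → ℂ, conj (eval (Sum.elim z (conj ∘ z)) F) = eval (Sum.elim z (conj ∘ z)) F)
    (ζ η : σ → ℂ) : eval (Sum.elim ζ η) F = conj (eval (Sum.elim (conj ∘ η) (conj ∘ ζ)) F) := by
  set F' := rename Sum.swap (map (starRingEnd ℂ) F)
  have hF' : ∀ ζ η : σ → ℂ,
      eval (Sum.elim ζ η) F' = conj (eval (Sum.elim (conj ∘ η) (conj ∘ ζ)) F) := by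
    intro ζ η
    rw [eval_rename, map_eval]
    congr 2
    funext i
    rcases i with j | j <;> simp
  have := eq_zero_of_eval_sumElim_conj_eq_zero (F := F - F') fun z => by
    rw [map_sub, hF', sub_eq_zero, ← hF z]
    congr 3
    funext i
    rcases i with j | j <;> simp
  rw [← hF', sub_eq_zero.mp this]

theorem IsHomogeneous.eval_smul {R : Type*} [CommSemiring R] {p : MvPolynomial σ R} {d : ℕ}
    (hp : p.IsHomogeneous d) (t : R) (z : σ → R) : eval (t • z) p = t ^ d * eval z p := by
  rw [eval_eq, eval_eq, mul_sum]
  refine sum_congr rfl fun s hs => ?_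
  simp only [Pi.smul_apply, smul_eq_mul, mul_pow, prod_mul_distrib, prod_pow_eq_pow_sum]
  rw [← hp.degree_eq_sum_deg_support hs]
  ring

end MvPolynomial

theorem Polynomial.apply_eq_of_forall_sum_mul_pow_sub_eq {R : Type*} [CommRing R] [IsDomain R]
    [Infinite R] {D : Finset ℕ} {N : ℕ} {u v : ℕ → R} (hD : ∀ d ∈ D, d ≤ N)
    (huv : ∀ t : R, ∑ d ∈ D, u d * t ^ (N - d) = ∑ d ∈ D, v d * t ^ d) {d : ℕ} (hd : d ∈ D) :
    u d = if N - d ∈ D then v (N - d) else 0 := by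
  open Polynomial in
  have hpoly : ∑ d ∈ D, C (u d) * X ^ (N - d) = ∑ d ∈ D, C (v d) * X ^ d :=
    funext fun t => by simpa [eval_finsetSum] using huv t
  have hcoeff := congrArg (coeff · (N - d)) hpoly
  simp only [finsetSum_coeff, coeff_C_mul_X_pow] at hcoeff
  rwa [sum_ite_eq, sum_eq_single_of_mem d hd fun d' hd' hne => if_neg (by grind), if_pos rfl]
    at hcoeff

section PolarForm

variable {σ : Type*}

-- The polarization of `z ↦ ∑_{d ∈ D} A_d(z̄) h(z)^{(N - d)/dh}`, which is
-- `fun z => polarForm N dh D A h z (conj ∘ z)`.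
noncomputable def polarForm (N dh : ℕ) (D : Finset ℕ) (A : ℕ → MvPolynomial σ ℂ)
    (h : MvPolynomial σ ℂ) (ζ η : σ → ℂ) : ℂ :=
  ∑ d ∈ D, eval η (A d) * eval ζ h ^ ((N - d) / dh)

variable {N dh : ℕ} {D : Finset ℕ} {A : ℕ → MvPolynomial σ ℂ} {h : MvPolynomial σ ℂ}

theorem polarForm_eq_conj
    (hreal : ∀ z, conj (polarForm N dh D A h z (conj ∘ z)) = polarForm N dh D A h z (conj ∘ z))
    (ζ η : σ → ℂ) :
    polarForm N dh D A h ζ η = conj (polarForm N dh D A h (conj ∘ η) (conj ∘ ζ)) := by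
  set F : MvPolynomial (σ ⊕ σ) ℂ :=
    ∑ d ∈ D, rename Sum.inr (A d) * rename Sum.inl h ^ ((N - d) / dh)
  have hF : ∀ ζ η, eval (Sum.elim ζ η) F = polarForm N dh D A h ζ η := fun ζ η => by
    simp [F, polarForm, eval_rename, Function.comp_def]
  simpa only [hF] using eval_sumElim_eq_conj_of_conj_eval_diag (F := F) (by simpa only [hF]) ζ η

theorem polarForm_term_eq (hA : ∀ d, (A d).IsHomogeneous d) (hh : h.IsHomogeneous dh)
    (hD : ∀ d ∈ D, d ≤ N ∧ dh ∣ N - d)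
    (hreal : ∀ z, conj (polarForm N dh D A h z (conj ∘ z)) = polarForm N dh D A h z (conj ∘ z))
    (ζ η : σ → ℂ) {d : ℕ} (hd : d ∈ D) :
    eval η (A d) * eval ζ h ^ ((N - d) / dh) =
      if N - d ∈ D then conj (eval (conj ∘ ζ) (A (N - d)) * eval (conj ∘ η) h ^ (d / dh))
      else 0 := by
  -- scaling `ζ ↦ t • ζ` turns the term of index `d` on the left into a multiple of `t ^ (N - d)`
  -- and on the right into a multiple of `t ^ d`
  have key := Polynomial.apply_eq_of_forall_sum_mul_pow_sub_eq (fun d hd => (hD d hd).1)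
    (u := fun d => eval η (A d) * eval ζ h ^ ((N - d) / dh))
    (v := fun d => conj (eval (conj ∘ ζ) (A d) * eval (conj ∘ η) h ^ ((N - d) / dh)))
    (fun t => by
      have := polarForm_eq_conj hreal (t • ζ) η
      simp only [polarForm, map_sum] at this
      convert this using 1 <;> refine sum_congr rfl fun d hd => ?_
      · rw [hh.eval_smul, mul_pow, ← pow_mul, Nat.mul_div_cancel' (hD d hd).2]
        ring
      · have hconj : conj ∘ (t • ζ) = conj t • (conj ∘ ζ) := by
          funext i
          simp
        rw [hconj, (hA d).eval_smul]
        simp only [map_mul, map_pow, Complex.conj_conj]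
        ring) hd
  rwa [Nat.sub_sub_self (hD d hd).1] at key

theorem dvd_of_polarForm_ne_zero (hA : ∀ d, (A d).IsHomogeneous d) (hh : h.IsHomogeneous dh)
    (hD : ∀ d ∈ D, d ≤ N ∧ dh ∣ N - d)
    (hreal : ∀ z, conj (polarForm N dh D A h z (conj ∘ z)) = polarForm N dh D A h z (conj ∘ z))
    (hP0 : ∃ z, polarForm N dh D A h z (conj ∘ z) ≠ 0) : dh ∣ N := by
  obtain ⟨z, hz⟩ := hP0
  obtain ⟨d, hd, hterm⟩ := exists_ne_zero_of_sum_ne_zero hz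
  rw [polarForm_term_eq hA hh hD hreal z _ hd] at hterm
  have hNd : N - d ∈ D := by
    by_contra hNd
    exact hterm (if_neg hNd)
  have hdvd := (hD _ hNd).2
  rw [Nat.sub_sub_self (hD d hd).1] at hdvd
  simpa [Nat.sub_add_cancel (hD d hd).1] using Nat.dvd_add (hD d hd).2 hdvd

theorem exists_eval_conj_eq_mul_conj_pow (hA : ∀ d, (A d).IsHomogeneous d)
    (hh : h.IsHomogeneous dh) (hD : ∀ d ∈ D, d ≤ N ∧ dh ∣ N - d)
    (hreal : ∀ z, conj (polarForm N dh D A h z (conj ∘ z)) = polarForm N dh D A h z (conj ∘ z))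
    {ζ₀ : σ → ℂ} (hζ₀ : eval ζ₀ h ≠ 0) {d : ℕ} (hd : d ∈ D) :
    ∃ c : ℂ, ∀ z, eval (conj ∘ z) (A d) = c * conj (eval z h) ^ (d / dh) := by
  refine ⟨(if N - d ∈ D then conj (eval (conj ∘ ζ₀) (A (N - d))) else 0) /
    eval ζ₀ h ^ ((N - d) / dh), fun z => ?_⟩
  have hterm := polarForm_term_eq hA hh hD hreal ζ₀ (conj ∘ z) hd
  have hz : conj ∘ (conj ∘ z) = z := by
    funext i
    simp
  rw [hz] at hterm
  rw [div_mul_eq_mul_div, eq_div_iff (pow_ne_zero _ hζ₀), hterm]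
  split_ifs <;> simp

theorem polarForm_diag_eq_sum_conj_pow_mul_pow (hh0 : h ≠ 0) (hdh : 0 < dh)
    (hA : ∀ d, (A d).IsHomogeneous d) (hh : h.IsHomogeneous dh)
    (hD : ∀ d ∈ D, 1 ≤ d ∧ d ≤ N ∧ dh ∣ N - d)
    (hreal : ∀ z, conj (polarForm N dh D A h z (conj ∘ z)) = polarForm N dh D A h z (conj ∘ z))
    (hP0 : ∃ z, polarForm N dh D A h z (conj ∘ z) ≠ 0) :
    dh ∣ N ∧ ∃ γ : ℕ → ℂ, ∀ z, polarForm N dh D A h z (conj ∘ z) =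
      ∑ l ∈ Icc 1 N, γ l * conj (eval z h) ^ l * eval z h ^ (N / dh - l) := by
  have hD' : ∀ d ∈ D, d ≤ N ∧ dh ∣ N - d := fun d hd => (hD d hd).2
  have hN := dvd_of_polarForm_ne_zero hA hh hD' hreal hP0
  have hdvd : ∀ d ∈ D, dh ∣ d := fun d hd => by
    simpa [Nat.sub_sub_self (hD d hd).2.1] using Nat.dvd_sub hN (hD d hd).2.2
  obtain ⟨ζ₀, hζ₀⟩ : ∃ ζ₀, eval ζ₀ h ≠ 0 := by
    by_contra! h0
    exact hh0 (funext fun ζ => by simp [h0 ζ])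
  choose! c hc using fun d (hd : d ∈ D) => exists_eval_conj_eq_mul_conj_pow hA hh hD' hreal hζ₀ hd
  refine ⟨hN, fun l => ∑ d ∈ D with d / dh = l, c d, fun z => ?_⟩
  have hmaps : ∀ d ∈ D, d / dh ∈ Icc 1 N := fun d hd => mem_Icc.mpr
    ⟨(Nat.one_le_div_iff hdh).mpr (Nat.le_of_dvd (hD d hd).1 (hdvd d hd)),
      (Nat.div_le_self d dh).trans (hD d hd).2.1⟩
  calc polarForm N dh D A h z (conj ∘ z)
      = ∑ d ∈ D, c d * conj (eval z h) ^ (d / dh) * eval z h ^ (N / dh - d / dh) := by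
        refine sum_congr rfl fun d hd => ?_
        obtain ⟨l, hl⟩ := hdvd d hd
        rw [hc d hd z, hl, Nat.sub_mul_div, Nat.mul_div_cancel_left l hdh]
    _ = _ := by
        rw [← sum_fiberwise_of_maps_to hmaps]
        refine sum_congr rfl fun l _ => ?_
        rw [sum_mul, sum_mul]
        refine sum_congr rfl fun d hd => ?_
        rw [(mem_filter.mp hd).2]

end PolarForm

theorem Finsupp.one_le_sum_of_ne_zero {ι : Type*} [Fintype ι] {β : ι →₀ ℕ} (hβ : β ≠ 0) :
    1 ≤ ∑ i, β i := by
  rwa [Nat.one_le_iff_ne_zero, ← Finsupp.degree_eq_sum, Ne, Finsupp.degree_eq_zero_iff]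

theorem conj_mpow {n : ℕ} (z : Fin n → ℂ) (β : Fin n →₀ ℕ) :
    conj (mpow z β) = mpow (conj ∘ z) β := by
  simp [mpow, map_prod]

theorem eval_monomial_eq_mul_mpow {n : ℕ} (w : Fin n → ℂ) (β : Fin n →₀ ℕ) (c : ℂ) :
    eval w (monomial β c) = c * mpow w β := by
  rw [eval_monomial, mpow, Finsupp.prod_fintype _ _ fun i => pow_zero _]

theorem conj_pval {n : ℕ} {J : Finset ((Fin n →₀ ℕ) × (Fin n →₀ ℕ))}
    {a : (Fin n →₀ ℕ) × (Fin n →₀ ℕ) → ℂ} (hsym : ∀ p ∈ J, (p.2, p.1) ∈ J)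
    (hherm : ∀ p : (Fin n →₀ ℕ) × (Fin n →₀ ℕ), a (p.2, p.1) = conj (a p)) (z : Fin n → ℂ) :
    conj (pval J a z) = pval J a z := by
  rw [pval, map_sum]
  refine sum_nbij' Prod.swap Prod.swap hsym hsym (fun _ _ => rfl) (fun _ _ => rfl) fun p _ => ?_
  simp only [map_mul, Complex.conj_conj, Prod.swap, hherm]
  ring

theorem pval_eq_sum_mul_conj_mpow {n : ℕ} (J : Finset ((Fin n →₀ ℕ) × (Fin n →₀ ℕ)))
    (a : (Fin n →₀ ℕ) × (Fin n →₀ ℕ) → ℂ) (z : Fin n → ℂ) :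
    pval J a z = ∑ β ∈ J.image Prod.snd,
      (∑ p ∈ J with p.2 = β, a p * mpow z p.1) * conj (mpow z β) := by
  rw [pval, ← sum_fiberwise_of_maps_to fun p hp => mem_image_of_mem Prod.snd hp]
  refine sum_congr rfl fun β _ => ?_
  rw [sum_mul]
  refine sum_congr rfl fun p hp => ?_
  rw [(mem_filter.mp hp).2]

theorem sum_mul_mpow_mul_eq_sum_eval {n : ℕ} (S : Finset (Fin n →₀ ℕ))
    (c : (Fin n →₀ ℕ) → ℂ) (f : ℕ → ℂ) (w : Fin n → ℂ) :
    ∑ β ∈ S, c β * mpow w β * f (∑ i, β i) =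
      ∑ d ∈ S.image (fun β => ∑ i, β i),
        eval w (∑ β ∈ S with ∑ i, β i = d, monomial β (c β)) * f d := by
  rw [← sum_fiberwise_of_maps_to fun β hβ => mem_image_of_mem (fun β => ∑ i, β i) hβ]
  refine sum_congr rfl fun d _ => ?_
  rw [map_sum, sum_mul]
  refine sum_congr rfl fun β hβ => ?_
  rw [eval_monomial_eq_mul_mpow, (mem_filter.mp hβ).2]

theorem exists_pval_eq_polarForm {n N dh : ℕ} {J : Finset ((Fin n →₀ ℕ) × (Fin n →₀ ℕ))}
    {a : (Fin n →₀ ℕ) × (Fin n →₀ ℕ) → ℂ} {h : MvPolynomial (Fin n) ℂ}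
    (hdeg : ∀ p ∈ J, (∑ i, p.1 i) + (∑ i, p.2 i) = N)
    (hnp : ∀ p ∈ J, p.1 ≠ 0 ∧ p.2 ≠ 0)
    (hPb : ∀ β : Fin n →₀ ℕ, 1 ≤ ∑ i, β i → ∑ i, β i ≤ N - 1 →
      (∀ z : Fin n → ℂ, (∑ p ∈ J.filter (fun p => p.2 = β), a p * mpow z p.1) = 0) ∨
      (dh ∣ N - ∑ i, β i ∧ 0 < (N - ∑ i, β i) / dh ∧ ∃ c : ℂ,
        ∀ z : Fin n → ℂ, (∑ p ∈ J.filter (fun p => p.2 = β), a p * mpow z p.1) =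
          c * (MvPolynomial.eval z h) ^ ((N - ∑ i, β i) / dh))) :
    ∃ (D : Finset ℕ) (A : ℕ → MvPolynomial (Fin n) ℂ), (∀ d, (A d).IsHomogeneous d) ∧
      (∀ d ∈ D, 1 ≤ d ∧ d ≤ N ∧ dh ∣ N - d) ∧
      ∀ z, pval J a z = polarForm N dh D A h z (conj ∘ z) := by
  have hbounds : ∀ β ∈ J.image Prod.snd, 1 ≤ ∑ i, β i ∧ ∑ i, β i ≤ N - 1 := by
    simp only [mem_image]
    rintro β ⟨p, hp, rfl⟩
    have h1 := Finsupp.one_le_sum_of_ne_zero (hnp p hp).1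
    have h2 := Finsupp.one_le_sum_of_ne_zero (hnp p hp).2
    have := hdeg p hp
    omega
  have hcoeff : ∀ β ∈ J.image Prod.snd, ∃ c : ℂ,
      (∀ z, ∑ p ∈ J with p.2 = β, a p * mpow z p.1 = c * eval z h ^ ((N - ∑ i, β i) / dh)) ∧
      (c ≠ 0 → dh ∣ N - ∑ i, β i) := fun β hβ => by
    rcases hPb β (hbounds β hβ).1 (hbounds β hβ).2 with hzero | ⟨hdvd, -, c, hc⟩
    · exact ⟨0, fun z => by rw [hzero z, zero_mul], fun h0 => absurd rfl h0⟩
    · exact ⟨c, hc, fun _ => hdvd⟩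
  choose! c hc hcdvd using hcoeff
  set S := {β ∈ J.image Prod.snd | c β ≠ 0}
  refine ⟨S.image (fun β => ∑ i, β i), fun d => ∑ β ∈ S with ∑ i, β i = d, monomial β (c β),
    fun d => IsHomogeneous.sum _ _ _ fun β hβ => isHomogeneous_monomial _ ?_, ?_, fun z => ?_⟩
  · rw [Finsupp.degree_eq_sum, (mem_filter.mp hβ).2]
  · intro d hd
    obtain ⟨β, hβS, rfl⟩ := mem_image.mp hd
    obtain ⟨hβ, hc0⟩ := mem_filter.mp hβS
    exact ⟨(hbounds β hβ).1, by grind, hcdvd β hβ hc0⟩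
  · rw [pval_eq_sum_mul_conj_mpow, polarForm,
      ← sum_mul_mpow_mul_eq_sum_eval (f := fun d => eval z h ^ ((N - d) / dh)),
      sum_filter_of_ne (p := fun β => c β ≠ 0) fun β _ hne h0 => by simp [h0] at hne]
    refine sum_congr rfl fun β hβ => ?_
    rw [hc β hβ z, conj_mpow]
    ring

theorem stmt19_general {n k : ℕ}
    (J : Finset ((Fin n →₀ ℕ) × (Fin n →₀ ℕ)))
    (a : (Fin n →₀ ℕ) × (Fin n →₀ ℕ) → ℂ)
    (hdeg : ∀ p ∈ J, (∑ i, p.1 i) + (∑ i, p.2 i) = 2 * k)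
    (hnp : ∀ p ∈ J, p.1 ≠ 0 ∧ p.2 ≠ 0)
    (hsym : ∀ p ∈ J, (p.2, p.1) ∈ J)
    (hherm : ∀ p : (Fin n →₀ ℕ) × (Fin n →₀ ℕ), a (p.2, p.1) = conj (a p))
    (h : MvPolynomial (Fin n) ℂ) (hh0 : h ≠ 0) (dh : ℕ) (hdh : 0 < dh)
    (hhh : h.IsHomogeneous dh)
    (hPb : ∀ β : Fin n →₀ ℕ, 1 ≤ ∑ i, β i → ∑ i, β i ≤ 2 * k - 1 →
      (∀ z : Fin n → ℂ, (∑ p ∈ J.filter (fun p => p.2 = β), a p * mpow z p.1) = 0) ∨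
      (dh ∣ 2 * k - ∑ i, β i ∧ 0 < (2 * k - ∑ i, β i) / dh ∧ ∃ c : ℂ,
        ∀ z : Fin n → ℂ, (∑ p ∈ J.filter (fun p => p.2 = β), a p * mpow z p.1) =
          c * (MvPolynomial.eval z h) ^ ((2 * k - ∑ i, β i) / dh)))
    (hP0 : ∃ z : Fin n → ℂ, pval J a z ≠ 0) :
    dh ∣ 2 * k ∧ ∃ (L : ℕ) (γ : ℕ → ℂ), ∀ z : Fin n → ℂ,
      pval J a z = ∑ l ∈ Finset.Icc 1 L,
        γ l * conj (MvPolynomial.eval z h) ^ l *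
          (MvPolynomial.eval z h) ^ (2 * k / dh - l) := by
  obtain ⟨D, A, hA, hD, hrep⟩ := exists_pval_eq_polarForm hdeg hnp hPb
  have hreal : ∀ z, conj (polarForm (2 * k) dh D A h z (conj ∘ z)) =
      polarForm (2 * k) dh D A h z (conj ∘ z) := fun z => by
    rw [← hrep, conj_pval hsym hherm]
  obtain ⟨hdvd, γ, hγ⟩ := polarForm_diag_eq_sum_conj_pow_mul_pow hh0 hdh hA hhh hD hreal
    (by simpa only [hrep] using hP0)
  exact ⟨hdvd, 2 * k, γ, fun z => (hrep z).trans (hγ z)⟩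

/-- let `P(z) = ∑_β z̄^β P_β(z)` be a real-valued plurisubharmonic
polynomial, homogeneous of degree `2k`, without pluriharmonic terms, where
`P_β(z) = ∑_{|α| = 2k−|β|} a_{α,β} z^α`.  Suppose `h` is a nonzero holomorphic
homogeneous polynomial (of positive degree `dh`) such that for every `β` either
`P_β ≡ 0`, or `(2k−|β|)/dh` is a positive integer and `P_β = c_β·h^{(2k−|β|)/dh}`.
If `P ≢ 0`, then `dh ∣ 2k` and there is `s(τ) = ∑_{l=1}^L γ_l τ̄^l τ^{2k/dh − l}` with
`P = s ∘ h` on `ℂⁿ`. -/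
theorem stmt19 {n k : ℕ} (hk : 0 < k)
    (J : Finset ((Fin n →₀ ℕ) × (Fin n →₀ ℕ)))
    (a : (Fin n →₀ ℕ) × (Fin n →₀ ℕ) → ℂ)
    (hdeg : ∀ p ∈ J, (∑ i, p.1 i) + (∑ i, p.2 i) = 2 * k)
    (hnp : ∀ p ∈ J, p.1 ≠ 0 ∧ p.2 ≠ 0)
    (hsym : ∀ p ∈ J, (p.2, p.1) ∈ J)
    (hherm : ∀ p : (Fin n →₀ ℕ) × (Fin n →₀ ℕ), a (p.2, p.1) = conj (a p))
    (hpsh : ∀ z V : Fin n → ℂ, 0 ≤ (leviForm J a z V).re)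
    (h : MvPolynomial (Fin n) ℂ) (hh0 : h ≠ 0) (dh : ℕ) (hdh : 0 < dh)
    (hhh : h.IsHomogeneous dh)
    (hPb : ∀ β : Fin n →₀ ℕ, 1 ≤ ∑ i, β i → ∑ i, β i ≤ 2 * k - 1 →
      (∀ z : Fin n → ℂ, (∑ p ∈ J.filter (fun p => p.2 = β), a p * mpow z p.1) = 0) ∨
      (dh ∣ 2 * k - ∑ i, β i ∧ 0 < (2 * k - ∑ i, β i) / dh ∧ ∃ c : ℂ,
        ∀ z : Fin n → ℂ, (∑ p ∈ J.filter (fun p => p.2 = β), a p * mpow z p.1) =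
          c * (MvPolynomial.eval z h) ^ ((2 * k - ∑ i, β i) / dh)))
    (hP0 : ∃ z : Fin n → ℂ, pval J a z ≠ 0) :
    dh ∣ 2 * k ∧ ∃ (L : ℕ) (γ : ℕ → ℂ), ∀ z : Fin n → ℂ,
      pval J a z = ∑ l ∈ Finset.Icc 1 L,
        γ l * conj (MvPolynomial.eval z h) ^ l *
          (MvPolynomial.eval z h) ^ (2 * k / dh - l) :=
  stmt19_general J a hdeg hnp hsym hherm h hh0 dh hdh hhh hPb hP0
end
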